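/- arXiv:2111.08131 — 2 statements merged into one kernel-verified Lean document; each statement's English description precedes it below -/
import Mathlib

section
/- Let {A^x_a} and {B^x_a} be measurements and {C^x_a} a submeasurement, all indexed by x ∼ μ with outcomes in a finite set. Suppose E_x Σ_{a≠b} τ(A^x_a C^x_b) ≤ δ and E_x Σ_a ‖A^x_a − B^x_a‖_τ² ≤ ε². Then E_x Σ_{a≠b} τ(B^x_a C^x_b) ≤ δ + ε. -/
open scoped Matrix ComplexOrder BigOperators

/-- The normalized trace (the unique tracial state on n×n complex matrices). -/
noncomputable def tau {n : ℕ} (A : Matrix (Fin n) (Fin n) ℂ) : ℂ := A.trace / (n : ℂ)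

/-- The squared τ-norm, `‖A‖_τ² = τ(A*A)` (a real number). -/
noncomputable def tauNormSq {n : ℕ} (A : Matrix (Fin n) (Fin n) ℂ) : ℝ := (tau (Aᴴ * A)).re

/-- A submeasurement: a family of positive semidefinite operators with sum at most the identity. -/
def IsSubmeasurement {n : ℕ} {α : Type*} [Fintype α]
    (M : α → Matrix (Fin n) (Fin n) ℂ) : Prop :=
  (∀ a, (M a).PosSemidef) ∧ (1 - ∑ a, M a).PosSemidef

/-- A measurement: a family of positive semidefinite operators summing to the identity. -/
def IsMeasurement {n : ℕ} {α : Type*} [Fintype α]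
    (M : α → Matrix (Fin n) (Fin n) ℂ) : Prop :=
  (∀ a, (M a).PosSemidef) ∧ (∑ a, M a) = 1

/-- A projective submeasurement: a family of orthogonal projections with sum at most the identity. -/
def IsProjectiveSubmeasurement {n : ℕ} {α : Type*} [Fintype α]
    (M : α → Matrix (Fin n) (Fin n) ℂ) : Prop :=
  (∀ a, (M a).IsHermitian ∧ M a * M a = M a) ∧ (1 - ∑ a, M a).PosSemidef

/-!
Since `A x` and `B x` both sum to the identity, `∑_{a ≠ b} τ(M_a C_b) = τ(∑_b C_b) - ∑_a τ(M_a C_a)`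
for `M = A x, B x`, so the two inconsistencies differ by `E_x ∑_a τ((A_a - B_a) C_a)`. Cauchy–Schwarz,
first for `τ` and then for the `μ`-weighted sum, bounds this by `ε (E_x ∑_a ‖C_a‖_τ²)^{1/2}`, and
`∑_a ‖C_a‖_τ² ≤ ∑_a τ(C_a) ≤ 1` because `0 ≤ C_a ≤ 1`.
-/

open Finset RCLike

namespace Matrix

variable {m 𝕜 : Type*} [Fintype m] [RCLike 𝕜]

lemma PosSemidef.trace_mul_nonneg {P Q : Matrix m m 𝕜} (hP : P.PosSemidef) (hQ : Q.PosSemidef) :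
    0 ≤ (P * Q).trace := by
  classical
  open scoped MatrixOrder in
  obtain ⟨R, rfl⟩ := CStarAlgebra.nonneg_iff_eq_star_mul_self.mp hP.nonneg
  rw [star_eq_conjTranspose, Matrix.mul_assoc, trace_mul_comm]
  exact (hQ.mul_mul_conjTranspose_same R).trace_nonneg

lemma re_trace_mul_le [DecidableEq m] (M N : Matrix m m 𝕜) :
    re (M * N).trace ≤ √(re (Mᴴ * M).trace) * √(re (Nᴴ * N).trace) := by
  -- the Frobenius inner product `⟪X, Y⟫ = tr (Y Xᴴ)`
  let _ := toMatrixSeminormedAddCommGroup (1 : Matrix m m 𝕜) PosSemidef.one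
  let _ := toMatrixInnerProductSpace (1 : Matrix m m 𝕜) PosSemidef.one
  have h := re_inner_le_norm (𝕜 := 𝕜) Nᴴ M
  rw [norm_eq_sqrt_re_inner (𝕜 := 𝕜) Nᴴ, norm_eq_sqrt_re_inner (𝕜 := 𝕜) M] at h
  change re (M * 1 * Nᴴᴴ).trace ≤ √(re (Nᴴ * 1 * Nᴴᴴ).trace) * √(re (M * 1 * Mᴴ).trace) at h
  simp only [Matrix.mul_one, conjTranspose_conjTranspose] at h
  rwa [trace_mul_comm M Mᴴ, mul_comm (√_)] at h

end Matrix

open Matrix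

variable {n : ℕ}

lemma re_tau (M : Matrix (Fin n) (Fin n) ℂ) : (tau M).re = M.trace.re / n := by
  rw [tau, ← Complex.ofReal_natCast, Complex.div_ofReal_re]

lemma tau_sum {ι : Type*} (s : Finset ι) (M : ι → Matrix (Fin n) (Fin n) ℂ) :
    tau (∑ i ∈ s, M i) = ∑ i ∈ s, tau (M i) := by
  simp only [tau, trace_sum, sum_div]

lemma tau_sub (M N : Matrix (Fin n) (Fin n) ℂ) : tau (M - N) = tau M - tau N := by
  simp only [tau, trace_sub, sub_div]

lemma re_tau_one_le : (tau (1 : Matrix (Fin n) (Fin n) ℂ)).re ≤ 1 := by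
  rw [re_tau, trace_one, Fintype.card_fin, Complex.natCast_re]
  exact div_self_le_one _

lemma re_tau_nonneg {P : Matrix (Fin n) (Fin n) ℂ} (hP : P.PosSemidef) : 0 ≤ (tau P).re := by
  rw [re_tau]
  exact div_nonneg (Complex.nonneg_iff.mp hP.trace_nonneg).1 n.cast_nonneg

lemma re_tau_mul_nonneg {P Q : Matrix (Fin n) (Fin n) ℂ} (hP : P.PosSemidef) (hQ : Q.PosSemidef) :
    0 ≤ (tau (P * Q)).re := by
  rw [re_tau]
  exact div_nonneg (Complex.nonneg_iff.mp (hP.trace_mul_nonneg hQ)).1 n.cast_nonneg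

lemma tauNormSq_nonneg (M : Matrix (Fin n) (Fin n) ℂ) : 0 ≤ tauNormSq M :=
  re_tau_nonneg (posSemidef_conjTranspose_mul_self M)

lemma re_tau_mul_le (M N : Matrix (Fin n) (Fin n) ℂ) :
    (tau (M * N)).re ≤ √(tauNormSq M) * √(tauNormSq N) := by
  have hn : (0 : ℝ) ≤ n := n.cast_nonneg
  have hN : 0 ≤ (Nᴴ * N).trace.re :=
    (Complex.nonneg_iff.mp (posSemidef_conjTranspose_mul_self N).trace_nonneg).1
  rw [tauNormSq, tauNormSq, re_tau, re_tau, re_tau, ← Real.sqrt_mul' _ (div_nonneg hN hn),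
    div_mul_div_comm, Real.sqrt_div' _ (mul_self_nonneg _), Real.sqrt_mul_self hn,
    Real.sqrt_mul' _ hN]
  exact div_le_div_of_nonneg_right (re_trace_mul_le M N) hn

lemma IsSubmeasurement.one_sub_posSemidef {α : Type*} [Fintype α]
    {C : α → Matrix (Fin n) (Fin n) ℂ} (hC : IsSubmeasurement C) (a : α) :
    (1 - C a).PosSemidef := by
  classical
  have h : 1 - C a = (1 - ∑ b, C b) + ∑ b ∈ univ.erase a, C b := by
    rw [← add_sum_erase _ _ (mem_univ a)]
    abel
  rw [h]
  exact hC.2.add (posSemidef_sum _ fun b _ => hC.1 b)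

lemma IsSubmeasurement.sum_tauNormSq_le_one {α : Type*} [Fintype α]
    {C : α → Matrix (Fin n) (Fin n) ℂ} (hC : IsSubmeasurement C) :
    ∑ a, tauNormSq (C a) ≤ 1 := by
  have hsq_le : ∀ a, tauNormSq (C a) ≤ (tau (C a)).re := fun a => by
    have h := re_tau_mul_nonneg (hC.1 a) (hC.one_sub_posSemidef a)
    rw [Matrix.mul_sub, Matrix.mul_one, tau_sub, Complex.sub_re, sub_nonneg] at h
    rwa [tauNormSq, (hC.1 a).isHermitian.eq]
  have hsum_le : (tau (∑ a, C a)).re ≤ (tau (1 : Matrix (Fin n) (Fin n) ℂ)).re := by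
    have h := re_tau_nonneg hC.2
    rwa [tau_sub, Complex.sub_re, sub_nonneg] at h
  calc ∑ a, tauNormSq (C a) ≤ ∑ a, (tau (C a)).re := sum_le_sum fun a _ => hsq_le a
    _ = (tau (∑ a, C a)).re := by rw [tau_sum, Complex.re_sum]
    _ ≤ 1 := hsum_le.trans re_tau_one_le

lemma sum_offDiag_re_tau_mul_of_sum_eq_one {α : Type*} [Fintype α] [DecidableEq α]
    {M : α → Matrix (Fin n) (Fin n) ℂ} (hM : ∑ a, M a = 1) (C : α → Matrix (Fin n) (Fin n) ℂ) :
    ∑ a, ∑ b, (if a = b then 0 else (tau (M a * C b)).re) =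
      (tau (∑ b, C b)).re - ∑ a, (tau (M a * C a)).re := by
  have hoff : ∀ a, ∑ b, (if a = b then 0 else (tau (M a * C b)).re) =
      ∑ b, (tau (M a * C b)).re - (tau (M a * C a)).re := fun a => by
    simp [sum_ite, filter_ne]
  have hfull : ∑ a, ∑ b, (tau (M a * C b)).re = (tau (∑ b, C b)).re :=
    calc ∑ a, ∑ b, (tau (M a * C b)).re = (tau ((∑ a, M a) * ∑ b, C b)).re := by
          simp only [sum_mul, mul_sum, tau_sum, Complex.re_sum]
          exact sum_comm
      _ = (tau (∑ b, C b)).re := by rw [hM, Matrix.one_mul]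
  rw [sum_congr rfl fun a _ => hoff a, sum_sub_distrib, hfull]

lemma sum_mul_sum_sqrt_mul_sqrt_le {X α : Type*} [Fintype X] [Fintype α] {μ : X → ℝ}
    (hμ : ∀ x, 0 ≤ μ x) {u v : X → α → ℝ} (hu : ∀ x a, 0 ≤ u x a) (hv : ∀ x a, 0 ≤ v x a) :
    ∑ x, μ x * ∑ a, √(u x a) * √(v x a) ≤
      √(∑ x, μ x * ∑ a, u x a) * √(∑ x, μ x * ∑ a, v x a) := by
  have hflat : ∀ w : X → α → ℝ,
      ∑ x, μ x * ∑ a, w x a = ∑ p ∈ univ ×ˢ univ, μ p.1 * w p.1 p.2 := fun w => by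
    simp only [sum_product, mul_sum]
  have hsplit : ∀ x a, μ x * (√(u x a) * √(v x a)) = √(μ x * u x a) * √(μ x * v x a) :=
    fun x a => by
      rw [Real.sqrt_mul (hμ x), Real.sqrt_mul (hμ x), mul_mul_mul_comm, Real.mul_self_sqrt (hμ x)]
  rw [hflat, hflat, hflat]
  simp only [hsplit]
  exact Real.sum_sqrt_mul_sqrt_le _ (fun p => mul_nonneg (hμ p.1) (hu p.1 p.2))
    (fun p => mul_nonneg (hμ p.1) (hv p.1 p.2))

lemma sum_mul_sum_re_tau_mul_le {X α : Type*} [Fintype X] [Fintype α] {μ : X → ℝ}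
    (hμ0 : ∀ x, 0 ≤ μ x) (hμ1 : ∑ x, μ x = 1) {C : X → α → Matrix (Fin n) (Fin n) ℂ}
    (hC : ∀ x, IsSubmeasurement (C x)) (D : X → α → Matrix (Fin n) (Fin n) ℂ) {ε : ℝ}
    (hε : 0 ≤ ε) (hD : ∑ x, μ x * ∑ a, tauNormSq (D x a) ≤ ε ^ 2) :
    ∑ x, μ x * ∑ a, (tau (D x a * C x a)).re ≤ ε := by
  have hC_avg : ∑ x, μ x * ∑ a, tauNormSq (C x a) ≤ 1 :=
    calc ∑ x, μ x * ∑ a, tauNormSq (C x a) ≤ ∑ x, μ x * 1 :=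
          sum_le_sum fun x _ => mul_le_mul_of_nonneg_left (hC x).sum_tauNormSq_le_one (hμ0 x)
      _ = 1 := by simp only [mul_one, hμ1]
  calc ∑ x, μ x * ∑ a, (tau (D x a * C x a)).re
      ≤ ∑ x, μ x * ∑ a, √(tauNormSq (D x a)) * √(tauNormSq (C x a)) := by
        gcongr with x _ a _
        · exact hμ0 x
        · exact re_tau_mul_le _ _
    _ ≤ √(∑ x, μ x * ∑ a, tauNormSq (D x a)) * √(∑ x, μ x * ∑ a, tauNormSq (C x a)) :=
        sum_mul_sum_sqrt_mul_sqrt_le hμ0 (fun _ _ => tauNormSq_nonneg _)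
          (fun _ _ => tauNormSq_nonneg _)
    _ ≤ √(ε ^ 2) * √1 := by gcongr
    _ = ε := by rw [Real.sqrt_sq hε, Real.sqrt_one, mul_one]

/-- Transferring consistency along closeness: if `A`, `B` are measurements, `C` a submeasurement,
`A` is `δ`-consistent with `C` and `A` is `ε`-close to `B`, then `B` is `(δ+ε)`-consistent
with `C`. -/
theorem transfer_consistency {n : ℕ} {X α : Type*}
    [Fintype X] [Fintype α] [DecidableEq α]
    (μ : X → ℝ) (hμ0 : ∀ x, 0 ≤ μ x) (hμ1 : ∑ x, μ x = 1)
    (A B C : X → α → Matrix (Fin n) (Fin n) ℂ)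
    (hA : ∀ x, IsMeasurement (A x)) (hB : ∀ x, IsMeasurement (B x))
    (hC : ∀ x, IsSubmeasurement (C x))
    (δ ε : ℝ) (hε : 0 ≤ ε)
    (h1 : ∑ x, μ x * ∑ a, ∑ b, (if a = b then 0 else (tau (A x a * C x b)).re) ≤ δ)
    (h2 : ∑ x, μ x * ∑ a, tauNormSq (A x a - B x a) ≤ ε ^ 2) :
    ∑ x, μ x * ∑ a, ∑ b, (if a = b then 0 else (tau (B x a * C x b)).re) ≤ δ + ε := by
  have hshift : ∀ x, ∑ a, ∑ b, (if a = b then 0 else (tau (B x a * C x b)).re) =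
      ∑ a, ∑ b, (if a = b then 0 else (tau (A x a * C x b)).re) +
        ∑ a, (tau ((A x a - B x a) * C x a)).re := fun x => by
    simp only [sum_offDiag_re_tau_mul_of_sum_eq_one (hA x).2,
      sum_offDiag_re_tau_mul_of_sum_eq_one (hB x).2, Matrix.sub_mul, tau_sub, Complex.sub_re,
      sum_sub_distrib]
    ring
  calc ∑ x, μ x * ∑ a, ∑ b, (if a = b then 0 else (tau (B x a * C x b)).re)
      = ∑ x, μ x * ∑ a, ∑ b, (if a = b then 0 else (tau (A x a * C x b)).re) +
          ∑ x, μ x * ∑ a, (tau ((A x a - B x a) * C x a)).re := by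
        simp only [hshift, mul_add, sum_add_distrib]
    _ ≤ δ + ε := add_le_add h1 (sum_mul_sum_re_tau_mul_le hμ0 hμ1 hC _ hε h2)
end

section
/- For each x in a finite question set 𝒳 let A^x = {A^x_a} be a submeasurement with answer set 𝒜, on a space with tracial state τ. Suppose that on average over independent uniform x,y ∈ 𝒳, E_{x,y} Σ_{a,b} ‖A^x_a A^y_b − A^y_b A^x_a‖_τ² ≤ ε². For a sequence s ∈ 𝒳^k and ā ∈ 𝒜^k define P^s_{ā} = A^{s₁}_{a₁} ⋯ A^{s_k}_{a_k}. Then for every k ≥ 1, E_{s∼𝒳^k, x∼𝒳} Σ_{ā,b} ‖P^s_{ā} A^x_b − A^x_b P^s_{ā}‖_τ² ≤ (kε)². -/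
open scoped Matrix ComplexOrder BigOperators

/-! Writing `P^{(s₀,s)}_{(a₀,a)} = A^{s₀}_{a₀} P^s_a`, the commutator splits as
`[A P, B] = A [P, B] + [A, B] P`. Since `∑_a (A^x_a)² ≤ 1` and `∑_a P^s_a (P^s_a)* ≤ 1`,
multiplying on the left by `A^{s₀}_{a₀}`, or on the right by `P^s_a`, and summing over the
answer does not increase the squared τ-norm; so the two pieces are bounded by the length-`k`
quantity and by the pairwise one. The inequality `‖u + v‖² ≤ (1 + t)‖u‖² + (1 + t⁻¹)‖v‖²`
with `t = 1 / k` then turns the bound `k²ε²` into `(k + 1)²ε²`. -/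

open Finset Matrix
open scoped MatrixOrder

lemma Fintype.sum_fin_succ_pi {β M : Type*} [Fintype β] [AddCommMonoid M] {k : ℕ}
    (f : (Fin (k + 1) → β) → M) :
    ∑ a, f a = ∑ a₀, ∑ a : Fin k → β, f (Fin.cons a₀ a) := by
  rw [← (Fin.consEquiv fun _ => β).sum_comp, Fintype.sum_prod_type]
  rfl

section StarOrderedRing

variable {R : Type*} [Semiring R] [PartialOrder R] [StarRing R] [StarOrderedRing R]

lemma sum_sum_mul_mul_star_le_one {ι κ : Type*} [Fintype ι] [Fintype κ] {b : ι → R} {c : κ → R}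
    (hb : ∑ i, b i * star (b i) ≤ 1) (hc : ∑ j, c j * star (c j) ≤ 1) :
    ∑ i, ∑ j, b i * c j * star (b i * c j) ≤ 1 :=
  calc ∑ i, ∑ j, b i * c j * star (b i * c j)
      = ∑ i, b i * (∑ j, c j * star (c j)) * star (b i) := by
        simp only [star_mul, mul_sum, sum_mul, mul_assoc]
    _ ≤ ∑ i, b i * 1 * star (b i) := by
        gcongr with i; exact star_right_conjugate_le_conjugate hc (b i)
    _ ≤ 1 := by simpa only [mul_one] using hb

lemma sum_ofFn_prod_mul_star_le_one {α : Type*} [Fintype α] {k : ℕ} (b : Fin k → α → R)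
    (hb : ∀ i, ∑ a, b i a * star (b i a) ≤ 1) :
    ∑ a : Fin k → α, (List.ofFn fun i => b i (a i)).prod *
      star (List.ofFn fun i => b i (a i)).prod ≤ 1 := by
  induction k with
  | zero => simp
  | succ k ih =>
    simpa only [Fintype.sum_fin_succ_pi, List.ofFn_succ, List.prod_cons, Fin.cons_zero,
      Fin.cons_succ] using
      sum_sum_mul_mul_star_le_one (hb 0) (ih (fun i => b i.succ) fun i => hb i.succ)

end StarOrderedRing

section Submeasurement

variable {n : ℕ} {α : Type*} [Fintype α] {M : α → Matrix (Fin n) (Fin n) ℂ}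

lemma Matrix.mul_self_le_self {P : Matrix (Fin n) (Fin n) ℂ} (h₀ : 0 ≤ P) (h₁ : P ≤ 1) :
    P * P ≤ P := by
  obtain ⟨S, hS, rfl⟩ : ∃ S, 0 ≤ S ∧ S * S = P :=
    ⟨CFC.sqrt P, CFC.sqrt_nonneg P, CFC.sqrt_mul_sqrt_self P h₀⟩
  calc S * S * (S * S) = S * (S * S) * S := by simp only [mul_assoc]
    _ ≤ S * 1 * S := hS.isSelfAdjoint.conjugate_le_conjugate h₁
    _ = S * S := by rw [mul_one]

lemma IsSubmeasurement.le_one (hM : IsSubmeasurement M) (a : α) : M a ≤ 1 :=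
  (single_le_sum (fun b _ => (hM.1 b).nonneg) (mem_univ a)).trans hM.2

lemma IsSubmeasurement.sum_mul_self_le_one (hM : IsSubmeasurement M) : ∑ a, M a * M a ≤ 1 :=
  (sum_le_sum fun a _ => Matrix.mul_self_le_self (hM.1 a).nonneg (hM.le_one a)).trans hM.2

lemma IsSubmeasurement.star_eq (hM : IsSubmeasurement M) (a : α) : star (M a) = M a :=
  (hM.1 a).isHermitian.eq

end Submeasurement

section TauNorm

variable {n : ℕ}

lemma Matrix.re_trace_le_re_trace {A B : Matrix (Fin n) (Fin n) ℂ} (h : A ≤ B) :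
    A.trace.re ≤ B.trace.re := by
  have := (Complex.le_def.1 (Matrix.le_iff.1 h).trace_nonneg).1
  rwa [trace_sub, Complex.sub_re, Complex.zero_re, sub_nonneg] at this

lemma tauNormSq_eq_re_trace (M : Matrix (Fin n) (Fin n) ℂ) :
    tauNormSq M = (Mᴴ * M).trace.re / n := by
  rw [tauNormSq, tau, ← Complex.ofReal_natCast, Complex.div_ofReal_re]

lemma tauNormSq_conjTranspose (M : Matrix (Fin n) (Fin n) ℂ) : tauNormSq Mᴴ = tauNormSq M := by
  rw [tauNormSq_eq_re_trace, tauNormSq_eq_re_trace, conjTranspose_conjTranspose, trace_mul_comm]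

lemma sum_tauNormSq_mul_le {ι : Type*} [Fintype ι] {b : ι → Matrix (Fin n) (Fin n) ℂ}
    (hb : ∑ i, star (b i) * b i ≤ 1) (M : Matrix (Fin n) (Fin n) ℂ) :
    ∑ i, tauNormSq (b i * M) ≤ tauNormSq M := by
  have hle : star M * (∑ i, star (b i) * b i) * M ≤ star M * 1 * M :=
    star_left_conjugate_le_conjugate hb M
  simp only [mul_sum, sum_mul, mul_one] at hle
  simpa only [tauNormSq_eq_re_trace, conjTranspose_mul, ← sum_div, ← Complex.re_sum,
    ← trace_sum, star_eq_conjTranspose, mul_assoc] using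
    div_le_div_of_nonneg_right (re_trace_le_re_trace hle) n.cast_nonneg

lemma sum_tauNormSq_mul_le' {ι : Type*} [Fintype ι] {b : ι → Matrix (Fin n) (Fin n) ℂ}
    (hb : ∑ i, b i * star (b i) ≤ 1) (M : Matrix (Fin n) (Fin n) ℂ) :
    ∑ i, tauNormSq (M * b i) ≤ tauNormSq M := by
  calc ∑ i, tauNormSq (M * b i) = ∑ i, tauNormSq (star (b i) * Mᴴ) := by
        simp only [← tauNormSq_conjTranspose (M * _), conjTranspose_mul, star_eq_conjTranspose]
    _ ≤ tauNormSq Mᴴ := sum_tauNormSq_mul_le (by simpa only [star_star] using hb) Mᴴ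
    _ = tauNormSq M := tauNormSq_conjTranspose M

attribute [local instance] Matrix.frobeniusNormedAddCommGroup in
lemma tauNormSq_eq_norm_sq (M : Matrix (Fin n) (Fin n) ℂ) : tauNormSq M = ‖M‖ ^ 2 / n := by
  have hnorm : ‖M‖ ^ 2 = ∑ i, ∑ j, ‖M i j‖ ^ 2 := by
    rw [frobenius_norm_def, ← Real.rpow_natCast, ← Real.rpow_mul (by positivity)]
    norm_num
  rw [tauNormSq_eq_re_trace, hnorm, sum_comm]
  simp [trace, mul_apply, Complex.conj_mul', ← Complex.ofReal_pow]

attribute [local instance] Matrix.frobeniusNormedAddCommGroup in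
lemma tauNormSq_add_le {t : ℝ} (ht : 0 < t) (M M' : Matrix (Fin n) (Fin n) ℂ) :
    tauNormSq (M + M') ≤ (1 + t) * tauNormSq M + (1 + t⁻¹) * tauNormSq M' := by
  simp only [tauNormSq_eq_norm_sq, ← mul_div_assoc, ← add_div]
  gcongr
  have hyoung : (‖M‖ + ‖M'‖) ^ 2 ≤ (1 + t) * ‖M‖ ^ 2 + (1 + t⁻¹) * ‖M'‖ ^ 2 := by
    have : 0 ≤ (t * ‖M‖ - ‖M'‖) ^ 2 / t := by positivity
    have e : (1 + t) * ‖M‖ ^ 2 + (1 + t⁻¹) * ‖M'‖ ^ 2 - (‖M‖ + ‖M'‖) ^ 2 =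
        (t * ‖M‖ - ‖M'‖) ^ 2 / t := by
      field_simp; ring
    linarith
  exact (pow_le_pow_left₀ (norm_nonneg _) (norm_add_le M M') 2).trans hyoung

end TauNorm

section Switcheroo

variable {n : ℕ} {X α : Type*} [Fintype α]

lemma sum_tauNormSq_mul_ofFn_prod_le {A : X → α → Matrix (Fin n) (Fin n) ℂ}
    (hA : ∀ x, IsSubmeasurement (A x)) {k : ℕ} (s : Fin k → X) (C : Matrix (Fin n) (Fin n) ℂ) :
    ∑ a : Fin k → α, tauNormSq (C * (List.ofFn fun i => A (s i) (a i)).prod) ≤ tauNormSq C :=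
  sum_tauNormSq_mul_le' (sum_ofFn_prod_mul_star_le_one (fun i => A (s i)) fun i => by
    simpa only [(hA (s i)).star_eq] using (hA (s i)).sum_mul_self_le_one) C

variable [Fintype X]

noncomputable def prodCommSum (A : X → α → Matrix (Fin n) (Fin n) ℂ) (k : ℕ) : ℝ :=
  ∑ s : Fin k → X, ∑ x, ∑ a : Fin k → α, ∑ b,
    tauNormSq ((List.ofFn fun i => A (s i) (a i)).prod * A x b -
      A x b * (List.ofFn fun i => A (s i) (a i)).prod)

noncomputable def pairCommSum (A : X → α → Matrix (Fin n) (Fin n) ℂ) : ℝ :=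
  ∑ x, ∑ y, ∑ a, ∑ b, tauNormSq (A x a * A y b - A y b * A x a)

lemma prodCommSum_one (A : X → α → Matrix (Fin n) (Fin n) ℂ) :
    prodCommSum A 1 = pairCommSum A := by
  simp only [prodCommSum, pairCommSum, ← (Equiv.funUnique (Fin 1) _).symm.sum_comp]
  simp

lemma prodCommSum_succ_le {A : X → α → Matrix (Fin n) (Fin n) ℂ}
    (hA : ∀ x, IsSubmeasurement (A x)) {t : ℝ} (ht : 0 < t) (k : ℕ) :
    prodCommSum A (k + 1) ≤ (1 + t) * (Fintype.card X * prodCommSum A k) +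
      (1 + t⁻¹) * (Fintype.card X ^ k * pairCommSum A) := by
  set P : (Fin k → X) → (Fin k → α) → Matrix (Fin n) (Fin n) ℂ :=
    fun s a => (List.ofFn fun i => A (s i) (a i)).prod
  calc prodCommSum A (k + 1)
      = ∑ s₀, ∑ s, ∑ x, ∑ a₀, ∑ a, ∑ b, tauNormSq (A s₀ a₀ * (P s a * A x b - A x b * P s a) +
          (A s₀ a₀ * A x b - A x b * A s₀ a₀) * P s a) := by
        simp only [prodCommSum, Fintype.sum_fin_succ_pi, List.ofFn_succ, List.prod_cons,
          Fin.cons_zero, Fin.cons_succ]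
        congr! 7
        noncomm_ring
    _ ≤ ∑ s₀, ∑ s, ∑ x, ∑ a₀, ∑ a, ∑ b,
          ((1 + t) * tauNormSq (A s₀ a₀ * (P s a * A x b - A x b * P s a)) +
          (1 + t⁻¹) * tauNormSq ((A s₀ a₀ * A x b - A x b * A s₀ a₀) * P s a)) := by
        gcongr; exact tauNormSq_add_le ht _ _
    _ = (1 + t) * ∑ s₀, ∑ s, ∑ x, ∑ a₀, ∑ a, ∑ b,
          tauNormSq (A s₀ a₀ * (P s a * A x b - A x b * P s a)) +
        (1 + t⁻¹) * ∑ s₀, ∑ s, ∑ x, ∑ a₀, ∑ a, ∑ b,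
          tauNormSq ((A s₀ a₀ * A x b - A x b * A s₀ a₀) * P s a) := by
        simp only [sum_add_distrib, mul_sum]
    _ ≤ (1 + t) * ∑ _s₀ : X, ∑ s, ∑ x, ∑ a, ∑ b, tauNormSq (P s a * A x b - A x b * P s a) +
        (1 + t⁻¹) * ∑ s₀, ∑ _s : Fin k → X, ∑ x, ∑ a₀, ∑ b,
          tauNormSq (A s₀ a₀ * A x b - A x b * A s₀ a₀) := by
        gcongr with s₀ _ s _ x _ <;> rw [sum_comm]
        · refine sum_le_sum fun a _ => ?_
          rw [sum_comm]
          exact sum_le_sum fun b _ => sum_tauNormSq_mul_le (by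
            simpa only [(hA s₀).star_eq] using (hA s₀).sum_mul_self_le_one) _
        · exact sum_le_sum fun b _ => sum_tauNormSq_mul_ofFn_prod_le hA s _
    _ = (1 + t) * (Fintype.card X * prodCommSum A k) +
        (1 + t⁻¹) * (Fintype.card X ^ k * pairCommSum A) := by
        simp only [prodCommSum, pairCommSum, P, sum_const, card_univ, Fintype.card_pi,
          prod_const, Fintype.card_fin, nsmul_eq_mul, mul_sum]
        push_cast; ring_nf

lemma prodCommSum_le [Nonempty X] {A : X → α → Matrix (Fin n) (Fin n) ℂ}
    (hA : ∀ x, IsSubmeasurement (A x)) {k : ℕ} (hk : 1 ≤ k) :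
    1 / (Fintype.card X : ℝ) ^ (k + 1) * prodCommSum A k ≤
      k ^ 2 * (1 / (Fintype.card X : ℝ) ^ 2 * pairCommSum A) := by
  set N : ℝ := (Fintype.card X : ℝ)
  have hN : N ≠ 0 := Nat.cast_ne_zero.2 Fintype.card_ne_zero
  induction k, hk using Nat.le_induction with
  | base => simp [prodCommSum_one]
  | succ k hk ih =>
    have hk₀ : (0 : ℝ) < k := by exact_mod_cast hk
    -- `t = 1 / k` balances the two terms: `(1 + 1 / k) k² + (1 + k) = (k + 1)²`.
    calc 1 / N ^ (k + 1 + 1) * prodCommSum A (k + 1)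
        ≤ 1 / N ^ (k + 2) * ((1 + (k : ℝ)⁻¹) * (N * prodCommSum A k) +
            (1 + (k : ℝ)⁻¹⁻¹) * (N ^ k * pairCommSum A)) := by
          gcongr; exact prodCommSum_succ_le hA (inv_pos.2 hk₀) k
      _ = (1 + (k : ℝ)⁻¹) * (1 / N ^ (k + 1) * prodCommSum A k) +
            (1 + k) * (1 / N ^ 2 * pairCommSum A) := by
          field_simp; ring
      _ ≤ (1 + (k : ℝ)⁻¹) * (k ^ 2 * (1 / N ^ 2 * pairCommSum A)) +
            (1 + k) * (1 / N ^ 2 * pairCommSum A) := by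
          gcongr
      _ = (↑(k + 1) : ℝ) ^ 2 * (1 / N ^ 2 * pairCommSum A) := by
          field_simp; push_cast; ring

end Switcheroo

theorem switcheroo_general {n : ℕ} {X α : Type*}
    [Fintype X] [Fintype α] [Nonempty X]
    (A : X → α → Matrix (Fin n) (Fin n) ℂ)
    (hA : ∀ x, IsSubmeasurement (A x))
    (ε : ℝ)
    (h : (1 / ((Fintype.card X : ℝ)) ^ 2) *
        ∑ x, ∑ y, ∑ a, ∑ b, tauNormSq (A x a * A y b - A y b * A x a) ≤ ε ^ 2)
    (k : ℕ) (hk : 1 ≤ k) :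
    (1 / ((Fintype.card X : ℝ)) ^ (k + 1)) *
        ∑ s : Fin k → X, ∑ x, ∑ a : Fin k → α, ∑ b,
          tauNormSq ((List.ofFn fun i => A (s i) (a i)).prod * A x b -
            A x b * (List.ofFn fun i => A (s i) (a i)).prod) ≤ (k * ε) ^ 2 :=
  calc _ ≤ (k : ℝ) ^ 2 * (1 / (Fintype.card X : ℝ) ^ 2 * pairCommSum A) := prodCommSum_le hA hk
    _ ≤ k ^ 2 * ε ^ 2 := by gcongr; exact h
    _ = (k * ε) ^ 2 := by ring

/-- Propagation of approximate commutativity to products (Proposition 2.13):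
if the submeasurements `A^x` pairwise approximately commute on average,
`E_{x,y} Σ_{a,b} ‖A^x_a A^y_b − A^y_b A^x_a‖_τ² ≤ ε²`, then for every `k ≥ 1`,
commuting a single element past the length-`k` product
`P^s_ā = A^{s₁}_{a₁} ⋯ A^{s_k}_{a_k}` incurs error at most `(kε)²`:
`E_{s ∼ X^k, x ∼ X} Σ_{ā,b} ‖P^s_ā A^x_b − A^x_b P^s_ā‖_τ² ≤ (kε)²`. -/
theorem switcheroo {n : ℕ} {X α : Type*}
    [Fintype X] [Fintype α] [Nonempty X]
    (A : X → α → Matrix (Fin n) (Fin n) ℂ)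
    (hA : ∀ x, IsSubmeasurement (A x))
    (ε : ℝ) (hε : 0 ≤ ε)
    (h : (1 / ((Fintype.card X : ℝ)) ^ 2) *
        ∑ x, ∑ y, ∑ a, ∑ b, tauNormSq (A x a * A y b - A y b * A x a) ≤ ε ^ 2)
    (k : ℕ) (hk : 1 ≤ k) :
    (1 / ((Fintype.card X : ℝ)) ^ (k + 1)) *
        ∑ s : Fin k → X, ∑ x, ∑ a : Fin k → α, ∑ b,
          tauNormSq ((List.ofFn fun i => A (s i) (a i)).prod * A x b -
            A x b * (List.ofFn fun i => A (s i) (a i)).prod) ≤ (k * ε) ^ 2 :=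
  switcheroo_general A hA ε h k hk
end
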